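/- For coprime positive integers h, k with 0 < h < k, the Dedekind sum satisfies the reciprocity law s(h,k) + s(k,h) = −1/4 + (1/12)( h/k + k/h + 1/(hk) ). -/

import Mathlib

/-!
Write `h * i = k * q i + r i` with `q i = ⌊h i / k⌋`. Since `i ↦ h i mod k` permutes `1, …, k - 1`,
the residues `r i` have the same sum and the same sum of squares as the `i`; this expresses
`s(h, k)` through `∑ q i ^ 2`. Counting the lattice points `(i, j) ∈ [1, k) × [1, h)` on either side
of the diagonal `k j = h i`, each weighted by `j`, turns `∑ q i ^ 2` into `∑ j ⌊k j / h⌋`, which is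
the sum that appears in `s(k, h)`.
-/

/-- The Dedekind sum `s(h, k)`. -/
noncomputable def dedekindSum (h k : ℕ) : ℝ :=
  ∑ i ∈ Finset.Ico 1 k,
    (i : ℝ) / k * ((h * i : ℝ) / k - ⌊(h * i : ℝ) / k⌋ - 1 / 2)

open Finset

theorem sum_Ico_one_natCast {K : Type*} [Field K] [CharZero K] (n : ℕ) :
    ∑ i ∈ Ico 1 n, (i : K) = n * (n - 1) / 2 := by
  induction n with
  | zero => simp
  | succ n ih =>
    rcases n.eq_zero_or_pos with rfl | hn
    · simp
    · rw [sum_Ico_succ_top hn, ih]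
      push_cast
      ring

theorem sum_Ico_one_natCast_sq {K : Type*} [Field K] [CharZero K] (n : ℕ) :
    ∑ i ∈ Ico 1 n, (i : K) ^ 2 = n * (n - 1) * (2 * n - 1) / 6 := by
  induction n with
  | zero => simp
  | succ n ih =>
    rcases n.eq_zero_or_pos with rfl | hn
    · simp
    · rw [sum_Ico_succ_top hn, ih]
      push_cast
      ring

theorem Nat.Coprime.sum_Ico_mul_mod {M : Type*} [AddCommMonoid M] {a n : ℕ} (hc : a.Coprime n)
    (f : ℕ → M) : ∑ i ∈ Ico 1 n, f (a * i % n) = ∑ i ∈ Ico 1 n, f i := by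
  have hmaps : Set.MapsTo (fun i => a * i % n) (Ico 1 n : Set ℕ) (Ico 1 n) := by
    intro i hi
    simp only [coe_Ico, Set.mem_Ico] at hi ⊢
    refine ⟨Nat.pos_of_ne_zero fun hzero => ?_, Nat.mod_lt _ (by omega)⟩
    have := Nat.le_of_dvd hi.1 ((hc.symm.dvd_mul_left).1 (Nat.dvd_of_mod_eq_zero hzero))
    omega
  have hinj : Set.InjOn (fun i => a * i % n) (Ico 1 n : Set ℕ) := by
    intro i hi j hj hij
    simp only [coe_Ico, Set.mem_Ico] at hi hj
    have := Nat.ModEq.cancel_left_of_coprime (Nat.coprime_comm.1 hc) hij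
    rwa [Nat.ModEq, Nat.mod_eq_of_lt hi.2, Nat.mod_eq_of_lt hj.2] at this
  exact sum_nbij _ hmaps hinj (surjOn_of_injOn_of_card_le _ hmaps hinj le_rfl) fun _ _ => rfl

theorem natCast_mod_eq_sub {R : Type*} [Ring R] (m n : ℕ) :
    ((m % n : ℕ) : R) = m - n * (m / n : ℕ) := by
  rw [eq_sub_iff_add_eq, ← Nat.cast_mul, ← Nat.cast_add, Nat.mod_add_div]

theorem dedekindSum_eq {a b : ℕ} (hb : 0 < b) :
    dedekindSum a b = (a * ∑ i ∈ Ico 1 b, (i : ℝ) ^ 2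
      - b * ∑ i ∈ Ico 1 b, (i : ℝ) * (a * i / b : ℕ)) / b ^ 2 - (b - 1) / 4 := by
  have hb' : (b : ℝ) ≠ 0 := by positivity
  have hterm (i : ℕ) : (i : ℝ) / b * ((a * i : ℝ) / b - ⌊(a * i : ℝ) / b⌋ - 1 / 2)
      = (a * i ^ 2 - b * (i * (a * i / b : ℕ))) / b ^ 2 - i / (2 * b) := by
    rw [Int.self_sub_floor, ← Nat.cast_mul, Int.fract_div_natCast_eq_div_natCast_mod,
      natCast_mod_eq_sub]
    field_simp
    push_cast
    ring
  rw [dedekindSum, sum_congr rfl fun i _ => hterm i, sum_sub_distrib, ← sum_div, ← sum_div,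
    sum_sub_distrib, ← mul_sum, ← mul_sum, sum_Ico_one_natCast]
  field_simp
  ring

theorem Nat.Coprime.sum_Ico_div {a b : ℕ} (hc : a.Coprime b) (hb : 0 < b) :
    2 * ∑ i ∈ Ico 1 b, ((a * i / b : ℕ) : ℝ) = (a - 1) * (b - 1) := by
  have h := hc.sum_Ico_mul_mod (fun r => (r : ℝ))
  simp only [natCast_mod_eq_sub, Nat.cast_mul] at h
  rw [sum_sub_distrib, ← mul_sum, ← mul_sum, sum_Ico_one_natCast] at h
  have hb' : (b : ℝ) ≠ 0 := by positivity
  apply mul_left_cancel₀ hb'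
  linear_combination (-2 : ℝ) * h

theorem Nat.Coprime.sum_Ico_mul_mul_div {a b : ℕ} (hc : a.Coprime b) :
    2 * a * b * ∑ i ∈ Ico 1 b, (i : ℝ) * (a * i / b : ℕ)
      = (a ^ 2 - 1) * ∑ i ∈ Ico 1 b, (i : ℝ) ^ 2
        + b ^ 2 * ∑ i ∈ Ico 1 b, ((a * i / b : ℕ) : ℝ) ^ 2 := by
  have h := hc.sum_Ico_mul_mod (fun r => (r : ℝ) ^ 2)
  have hexpand (i : ℕ) : ((a * i % b : ℕ) : ℝ) ^ 2 = a ^ 2 * i ^ 2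
      - 2 * a * b * (i * (a * i / b : ℕ)) + b ^ 2 * ((a * i / b : ℕ) : ℝ) ^ 2 := by
    rw [natCast_mod_eq_sub]
    push_cast
    ring
  simp only [hexpand, sum_add_distrib, sum_sub_distrib, ← mul_sum] at h
  linear_combination -h

theorem Ico_filter_mul_le {p q N : ℕ} (hq : 0 < q) (hp : p < N * q) :
    {j ∈ Ico 1 N | q * j ≤ p} = Ico 1 (p / q + 1) := by
  have hpN : p / q < N := (Nat.div_lt_iff_lt_mul hq).2 hp
  ext j
  simp only [mem_filter, mem_Ico, Nat.lt_succ_iff, Nat.le_div_iff_mul_le hq, mul_comm q]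
  constructor
  · rintro ⟨⟨hj, -⟩, hjp⟩
    exact ⟨hj, hjp⟩
  · rintro ⟨hj, hjp⟩
    have := (Nat.le_div_iff_mul_le hq).2 hjp
    exact ⟨⟨hj, by omega⟩, hjp⟩

theorem Nat.Coprime.sum_Ico_sum_Ico_add_sum_Ico_mul_div {h k : ℕ} (hc : h.Coprime k)
    (hh : 0 < h) (hk : 0 < k) :
    ∑ i ∈ Ico 1 k, ∑ j ∈ Ico 1 (h * i / k + 1), j + ∑ j ∈ Ico 1 h, j * (k * j / h)
      = (k - 1) * ∑ j ∈ Ico 1 h, j := by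
  have below (i) (hi : i ∈ Ico 1 k) :
      ∑ j ∈ Ico 1 h with k * j ≤ h * i, j = ∑ j ∈ Ico 1 (h * i / k + 1), j := by
    rw [Ico_filter_mul_le hk (by nlinarith [mem_Ico.1 hi])]
  have above (j) (hj : j ∈ Ico 1 h) :
      ∑ i ∈ Ico 1 k with ¬ k * j ≤ h * i, j = j * (k * j / h) := by
    obtain ⟨hj1, hjh⟩ := mem_Ico.1 hj
    -- coprimality keeps the lattice points off the diagonal `h * i = k * j`
    have hoff (i) (_ : i ∈ Ico 1 k) : ¬ k * j ≤ h * i ↔ h * i ≤ k * j := by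
      have hne : h * i ≠ k * j := fun heq =>
        hjh.not_ge (Nat.le_of_dvd hj1 (hc.dvd_mul_left.1 ⟨i, heq.symm⟩))
      omega
    rw [filter_congr hoff, Ico_filter_mul_le hh (by nlinarith), sum_const, Nat.card_Ico,
      Nat.add_sub_cancel, smul_eq_mul, mul_comm]
  calc _ = ∑ i ∈ Ico 1 k, ∑ j ∈ Ico 1 h with k * j ≤ h * i, j
        + ∑ j ∈ Ico 1 h, ∑ i ∈ Ico 1 k with ¬ k * j ≤ h * i, j := by
        rw [sum_congr rfl below, sum_congr rfl above]
    _ = ∑ i ∈ Ico 1 k, ∑ j ∈ Ico 1 h with k * j ≤ h * i, j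
        + ∑ i ∈ Ico 1 k, ∑ j ∈ Ico 1 h with ¬ k * j ≤ h * i, j := by
        simp only [sum_filter]
        rw [sum_comm (s := Ico 1 h)]
    _ = ∑ i ∈ Ico 1 k, ∑ j ∈ Ico 1 h, j := by
        simp only [← sum_add_distrib, sum_filter_add_sum_filter_not]
    _ = (k - 1) * ∑ j ∈ Ico 1 h, j := by
        rw [sum_const, Nat.card_Ico, smul_eq_mul]

theorem dedekindSum_reciprocity (h k : ℕ) (h0 : 0 < h) (hhk : h < k)
    (hcop : Nat.Coprime h k) :
    dedekindSum h k + dedekindSum k h =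
      -(1 / 4) + 1 / 12 * ((h : ℝ) / k + (k : ℝ) / h + 1 / ((h : ℝ) * k)) := by
  have hk : 0 < k := h0.trans hhk
  have hfloor := hcop.sum_Ico_div hk
  have hsq := hcop.sum_Ico_mul_mul_div
  have hlattice : ∑ i ∈ Ico 1 k, ((h * i / k : ℕ) : ℝ) ^ 2 + ∑ i ∈ Ico 1 k, ((h * i / k : ℕ) : ℝ)
      + 2 * ∑ j ∈ Ico 1 h, (j : ℝ) * (k * j / h : ℕ) = (k - 1) * h * (h - 1) := by
    have := congrArg (Nat.cast : ℕ → ℝ) (hcop.sum_Ico_sum_Ico_add_sum_Ico_mul_div h0 hk)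
    push_cast [Nat.cast_sub hk, sum_Ico_one_natCast, add_sub_cancel_right, add_mul, add_div,
      sum_add_distrib, ← sum_div, ← sq, one_mul] at this
    linear_combination 2 * this
  rw [dedekindSum_eq hk, dedekindSum_eq h0, sum_Ico_one_natCast_sq, sum_Ico_one_natCast_sq]
  rw [sum_Ico_one_natCast_sq] at hsq
  have hh' : (h : ℝ) ≠ 0 := by positivity
  have hk' : (k : ℝ) ≠ 0 := by positivity
  -- `hsq` trades `∑ i i ⌊h i / k⌋` for `∑ i ⌊h i / k⌋ ^ 2`, which `hlattice` trades for the
  -- `∑ j j ⌊k j / h⌋` of `s(k, h)`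
  linear_combination (norm := skip) (-1 / (2 * h * k ^ 2)) * hsq + (-1 / (2 * h)) * hlattice
    + (1 / (4 * h)) * hfloor
  field_simp
  ring
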